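/- arXiv:1806.04665 — 3 statements merged into one kernel-verified Lean document; each statement's English description precedes it below -/
import Mathlib

section
/- For every u in W^{1,2}_0(D) on the unit disk D in R^2, one has (1/4) ∫_D u(x)^2/(1-|x|)^2 dx ≤ ∫_D |∇u(x)|^2 dx. -/
open MeasureTheory

lemma hardy_ptwise (a b r s : ℝ) (hr : 0 ≤ r) (hs : 0 < s) :
    -(a ^ 2 / s + 2 * r * a * b / s) ≤ 1 / 2 * (r * a ^ 2 / s ^ 2) + 2 * (r * b ^ 2) := by
  have h1 : 0 ≤ a ^ 2 / s := div_nonneg (sq_nonneg a) hs.le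
  have h2 : 0 ≤ r / 2 * (a / s + 2 * b) ^ 2 := mul_nonneg (by linarith) (sq_nonneg _)
  have he : 1 / 2 * (r * a ^ 2 / s ^ 2) + 2 * (r * b ^ 2) - (-(a ^ 2 / s + 2 * r * a * b / s))
      = a ^ 2 / s + r / 2 * (a / s + 2 * b) ^ 2 := by
    field_simp
    ring
  linarith

lemma hardy_1d (ρ : ℝ) (hρ0 : 0 < ρ) (hρ1 : ρ < 1) (g g' : ℝ → ℝ)
    (hg : ∀ r, HasDerivAt g (g' r) r) (hg'c : Continuous g') (hgρ : g ρ = 0) :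
    ∫ r in (0:ℝ)..ρ, r * g r ^ 2 / (1 - r) ^ 2 ≤
      ∫ r in (0:ℝ)..ρ, (1 / 2 * (r * g r ^ 2 / (1 - r) ^ 2) + 2 * (r * g' r ^ 2)) := by
  have hgc : Continuous g := by
    rw [continuous_iff_continuousAt]; exact fun x => (hg x).continuousAt
  have hne : ∀ r ∈ Set.uIcc (0:ℝ) ρ, (1:ℝ) - r ≠ 0 := by
    intro r hr
    rw [Set.uIcc_of_le hρ0.le, Set.mem_Icc] at hr
    have : r < 1 := lt_of_le_of_lt hr.2 hρ1
    exact sub_ne_zero.mpr (by linarith)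
  have hne2 : ∀ r ∈ Set.uIcc (0:ℝ) ρ, ((1:ℝ) - r) ^ 2 ≠ 0 := fun r hr => pow_ne_zero _ (hne r hr)
  have c1 : IntervalIntegrable (fun r => g r ^ 2 / (1 - r)) volume 0 ρ :=
    (((hgc.pow 2).continuousOn).div
      ((continuous_const.sub continuous_id).continuousOn) hne).intervalIntegrable
  have c2 : IntervalIntegrable (fun r => 2 * r * g r * g' r / (1 - r)) volume 0 ρ :=
    (((((continuous_const.mul continuous_id).mul hgc).mul hg'c).continuousOn).div
      ((continuous_const.sub continuous_id).continuousOn) hne).intervalIntegrable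
  have c3 : IntervalIntegrable (fun r => r * g r ^ 2 / (1 - r) ^ 2) volume 0 ρ :=
    (((continuous_id.mul (hgc.pow 2)).continuousOn).div
      (((continuous_const.sub continuous_id).pow 2).continuousOn) hne2).intervalIntegrable
  have c4 : IntervalIntegrable
      (fun r => 1 / 2 * (r * g r ^ 2 / (1 - r) ^ 2) + 2 * (r * g' r ^ 2)) volume 0 ρ :=
    (c3.const_mul _).add
      ((continuous_const.mul (continuous_id.mul (hg'c.pow 2))).intervalIntegrable _ _)
  have hH : ∀ r ∈ Set.uIcc (0:ℝ) ρ, HasDerivAt (fun r => r * g r ^ 2 / (1 - r))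
      (g r ^ 2 / (1 - r) + 2 * r * g r * g' r / (1 - r) + r * g r ^ 2 / (1 - r) ^ 2) r := by
    intro r hr
    have h1r := hne r hr
    have hnum : HasDerivAt (fun r => r * g r ^ 2)
        (1 * g r ^ 2 + r * (2 * g r ^ 1 * g' r)) r :=
      (hasDerivAt_id r).mul ((hg r).pow 2)
    have hden : HasDerivAt (fun r : ℝ => 1 - r) (0 - 1) r :=
      (hasDerivAt_const r 1).sub (hasDerivAt_id r)
    have hd := hnum.div hden h1r
    refine hd.congr_deriv ?_
    field_simp
    ring
  have hsum : ∫ r in (0:ℝ)..ρ,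
      (g r ^ 2 / (1 - r) + 2 * r * g r * g' r / (1 - r) + r * g r ^ 2 / (1 - r) ^ 2) = 0 := by
    rw [intervalIntegral.integral_eq_sub_of_hasDerivAt hH ((c1.add c2).add c3)]
    simp [hgρ]
  have h2 := intervalIntegral.integral_add (c1.add c2) c3
  have hsplit : ∫ r in (0:ℝ)..ρ, r * g r ^ 2 / (1 - r) ^ 2
      = ∫ r in (0:ℝ)..ρ, -(g r ^ 2 / (1 - r) + 2 * r * g r * g' r / (1 - r)) := by
    rw [intervalIntegral.integral_neg]
    have h3 := intervalIntegral.integral_add c1 c2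
    linarith [h2, hsum, h3]
  rw [hsplit]
  apply intervalIntegral.integral_mono_on hρ0.le ((c1.add c2).neg) c4
  intro r hr
  have hr0 : 0 ≤ r := hr.1
  have hs : 0 < 1 - r := by have := hr.2; linarith
  exact hardy_ptwise (g r) (g' r) r (1 - r) hr0 hs

open Real in
lemma hardy_integrableOn {ρ : ℝ} (h : ℝ × ℝ → ℝ)
    (hc : ContinuousOn h (Set.Icc 0 ρ ×ˢ Set.Icc (-π) π))
    (h0 : ∀ p : ℝ × ℝ, ρ ≤ p.1 → h p = 0) :
    IntegrableOn h (Set.Ioi 0 ×ˢ Set.Ioo (-π) π) := by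
  have hK : IsCompact (Set.Icc (0:ℝ) ρ ×ˢ Set.Icc (-π) π) := isCompact_Icc.prod isCompact_Icc
  have h1 : IntegrableOn h (Set.Icc (0:ℝ) ρ ×ˢ Set.Icc (-π) π) := hc.integrableOn_compact hK
  have hmeas : MeasurableSet {p : ℝ × ℝ | ρ ≤ p.1} := measurableSet_Ici.preimage measurable_fst
  have h2 : IntegrableOn h {p : ℝ × ℝ | ρ ≤ p.1} :=
    (integrableOn_congr_fun (g := fun _ => (0:ℝ)) (fun p hp => h0 p hp) hmeas).mpr
      (integrableOn_zero)
  apply (h1.union h2).mono_set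
  rintro ⟨r, θ⟩ ⟨hr, hθ⟩
  by_cases hrρ : ρ ≤ r
  · exact Or.inr hrρ
  · exact Or.inl ⟨⟨le_of_lt hr, le_of_not_ge hrρ⟩, ⟨hθ.1.le, hθ.2.le⟩⟩

open Real in
/-- Hardy inequality on the unit disk: for `u ∈ W^{1,2}_0(D)` (formalized for smooth
functions compactly supported in the open unit disk `D ⊂ ℝ²`, a dense subset),
`(1/4) ∫_D u² / (1-|x|)² ≤ ∫_D |∇u|²`. -/
theorem stmt_0 (u : ℂ → ℝ) (hu : ContDiff ℝ (⊤ : ℕ∞) u) (hsupp : HasCompactSupport u)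
    (hsub : tsupport u ⊆ Metric.ball (0 : ℂ) 1) :
    (1 / 4) * ∫ x in Metric.ball (0 : ℂ) 1, (u x) ^ 2 / (1 - ‖x‖) ^ 2 ≤
      ∫ x in Metric.ball (0 : ℂ) 1, ‖fderiv ℝ u x‖ ^ 2 := by
  obtain ⟨ρ, hρmem, hρsub⟩ :=
    exists_pos_lt_subset_ball one_pos (isClosed_tsupport u) hsub
  obtain ⟨hρ0, hρ1⟩ := hρmem
  have hudiff := hu.differentiable (by simp)
  have hucont : Continuous u := hu.continuous
  have hu0 : ∀ x : ℂ, ρ ≤ ‖x‖ → u x = 0 := by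
    intro x hx
    apply image_eq_zero_of_notMem_tsupport
    intro hmem
    have := hρsub hmem
    rw [Metric.mem_ball, dist_zero_right] at this
    linarith
  have hdu0 : ∀ x : ℂ, ρ ≤ ‖x‖ → fderiv ℝ u x = 0 := by
    intro x hx
    by_contra h
    have hx' : x ∈ tsupport u := support_fderiv_subset (𝕜 := ℝ) (Function.mem_support.mpr h)
    have := hρsub hx'
    rw [Metric.mem_ball, dist_zero_right] at this
    linarith
  set dir : ℝ × ℝ → ℂ := fun p => (Real.cos p.2 : ℂ) + (Real.sin p.2 : ℂ) * Complex.I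
    with hdir_def
  set c : ℝ × ℝ → ℂ := fun p => (p.1 : ℂ) * dir p with hc_def
  have hcsymm : ∀ p : ℝ × ℝ, Complex.polarCoord.symm p = c p := by
    intro p
    rw [Complex.polarCoord_symm_apply]
  have hdirnorm : ∀ p : ℝ × ℝ, ‖dir p‖ = 1 := by
    intro p
    rw [hdir_def]
    simp only [Complex.ofReal_cos, Complex.ofReal_sin]
    rw [← Complex.exp_mul_I]
    exact Complex.norm_exp_ofReal_mul_I _
  have hcnorm : ∀ p : ℝ × ℝ, ‖c p‖ = |p.1| := by
    intro p
    rw [hc_def]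
    simp only [norm_mul, Complex.norm_real, Real.norm_eq_abs, hdirnorm p, mul_one]
  have hdircont : Continuous dir := by
    rw [hdir_def]; fun_prop
  have hccont : Continuous c := by
    rw [hc_def]; fun_prop
  have hfd : Continuous (fderiv ℝ u) := hu.continuous_fderiv (by simp)
  set D : ℝ × ℝ → ℝ := fun p => fderiv ℝ u (c p) (dir p) with hD_def
  have hDcont : Continuous D := (hfd.comp hccont).clm_apply hdircont
  set F : ℝ × ℝ → ℝ := fun p => p.1 * u (c p) ^ 2 / (1 - p.1) ^ 2 with hF_def
  set Fd : ℝ × ℝ → ℝ := fun p => p.1 * D p ^ 2 with hFd_def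
  set Fn : ℝ × ℝ → ℝ := fun p => p.1 * ‖fderiv ℝ u (c p)‖ ^ 2 with hFn_def
  set G : ℝ × ℝ → ℝ := fun p => 1 / 2 * F p + 2 * Fd p with hG_def
  set S : Set (ℝ × ℝ) := Set.Ioi 0 ×ˢ Set.Ioo (-π) π with hS_def
  have hSmeas : MeasurableSet S := measurableSet_Ioi.prod measurableSet_Ioo
  -- integrability
  have hFint : IntegrableOn F S := by
    apply hardy_integrableOn F
    · apply ContinuousOn.div
      · exact (continuous_fst.mul ((hucont.comp hccont).pow 2)).continuousOn
      · exact ((continuous_const.sub continuous_fst).pow 2).continuousOn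
      · intro p hp
        have h1 : p.1 ≤ ρ := hp.1.2
        exact pow_ne_zero _ (sub_ne_zero.mpr (by linarith))
    · intro p hp
      have : u (c p) = 0 := hu0 _ (by rw [hcnorm]; exact le_trans hp (le_abs_self _))
      simp [hF_def, this]
  have hFdint : IntegrableOn Fd S := by
    apply hardy_integrableOn Fd
    · exact (continuous_fst.mul (hDcont.pow 2)).continuousOn
    · intro p hp
      have : fderiv ℝ u (c p) = 0 := hdu0 _ (by rw [hcnorm]; exact le_trans hp (le_abs_self _))
      simp [hFd_def, hD_def, this]
  have hFnint : IntegrableOn Fn S := by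
    apply hardy_integrableOn Fn
    · exact (continuous_fst.mul (((hfd.comp hccont).norm).pow 2)).continuousOn
    · intro p hp
      have : fderiv ℝ u (c p) = 0 := hdu0 _ (by rw [hcnorm]; exact le_trans hp (le_abs_self _))
      simp [hFn_def, this]
  have hGint : IntegrableOn G S := (hFint.const_mul _).add (hFdint.const_mul _)
  -- polar coordinate conversions
  have hpolar1 : ∫ x in Metric.ball (0:ℂ) 1, (u x) ^ 2 / (1 - ‖x‖) ^ 2 = ∫ p in S, F p := by
    rw [setIntegral_eq_integral_of_forall_compl_eq_zero (f := fun x => (u x) ^ 2 / (1 - ‖x‖) ^ 2)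
      (fun x hx => ?_)]
    · rw [← Complex.integral_comp_polarCoord_symm (fun x => (u x) ^ 2 / (1 - ‖x‖) ^ 2),
        polarCoord_target]
      apply setIntegral_congr_fun hSmeas
      intro p hp
      have hp1 : 0 < p.1 := hp.1
      simp only [smul_eq_mul]
      rw [hcsymm p, hcnorm p, abs_of_pos hp1, hF_def]
      ring
    · have h1 : (1:ℝ) ≤ ‖x‖ := by
        rw [Metric.mem_ball, dist_zero_right, not_lt] at hx
        exact hx
      have h2 := hu0 x (le_trans hρ1.le h1)
      simp [h2]
  have hpolar2 : ∫ x in Metric.ball (0:ℂ) 1, ‖fderiv ℝ u x‖ ^ 2 = ∫ p in S, Fn p := by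
    rw [setIntegral_eq_integral_of_forall_compl_eq_zero (f := fun x => ‖fderiv ℝ u x‖ ^ 2)
      (fun x hx => ?_)]
    · rw [← Complex.integral_comp_polarCoord_symm (fun x => ‖fderiv ℝ u x‖ ^ 2),
        polarCoord_target]
      apply setIntegral_congr_fun hSmeas
      intro p hp
      simp only [smul_eq_mul]
      rw [hcsymm p, hFn_def]
    · have h1 : (1:ℝ) ≤ ‖x‖ := by
        rw [Metric.mem_ball, dist_zero_right, not_lt] at hx
        exact hx
      have h2 := hdu0 x (le_trans hρ1.le h1)
      simp [h2]
  -- Fubini / swap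
  have prodmeas : ((volume : Measure ℝ).restrict (Set.Ioi 0)).prod
      ((volume : Measure ℝ).restrict (Set.Ioo (-π) π)) = (volume : Measure (ℝ × ℝ)).restrict S := by
    rw [Measure.prod_restrict, ← Measure.volume_eq_prod, hS_def]
  have hFint' : Integrable F (((volume : Measure ℝ).restrict (Set.Ioi 0)).prod
      ((volume : Measure ℝ).restrict (Set.Ioo (-π) π))) := by
    rw [prodmeas]; exact hFint
  have hGint' : Integrable G (((volume : Measure ℝ).restrict (Set.Ioi 0)).prod
      ((volume : Measure ℝ).restrict (Set.Ioo (-π) π))) := by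
    rw [prodmeas]; exact hGint
  have hswapF : ∫ p in S, F p = ∫ θ in Set.Ioo (-π) π, ∫ r in Set.Ioi (0:ℝ), F (r, θ) := by
    rw [← prodmeas]
    exact integral_prod_symm F hFint'
  have hswapG : ∫ p in S, G p = ∫ θ in Set.Ioo (-π) π, ∫ r in Set.Ioi (0:ℝ), G (r, θ) := by
    rw [← prodmeas]
    exact integral_prod_symm G hGint'
  -- inner (radial) inequality, for every θ
  have hinner : ∀ θ : ℝ, (∫ r in Set.Ioi (0:ℝ), F (r, θ)) ≤ ∫ r in Set.Ioi (0:ℝ), G (r, θ) := by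
    intro θ
    set g : ℝ → ℝ := fun r => u (c (r, θ)) with hg_def
    set g' : ℝ → ℝ := fun r => D (r, θ) with hg'_def
    have hF0 : ∀ r ∈ Set.Ioi (0:ℝ) \ Set.Ioo 0 ρ, F (r, θ) = 0 := by
      rintro r ⟨hr1, hr2⟩
      have hr1' : (0:ℝ) < r := hr1
      have hrρ : ρ ≤ r := by
        by_contra h
        exact hr2 ⟨hr1', lt_of_not_ge h⟩
      have : u (c (r, θ)) = 0 := hu0 _ (by rw [hcnorm]; simpa [abs_of_pos hr1'] using hrρ)
      simp [hF_def, this]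
    have hG0 : ∀ r ∈ Set.Ioi (0:ℝ) \ Set.Ioo 0 ρ, G (r, θ) = 0 := by
      rintro r ⟨hr1, hr2⟩
      have hr1' : (0:ℝ) < r := hr1
      have hrρ : ρ ≤ r := by
        by_contra h
        exact hr2 ⟨hr1', lt_of_not_ge h⟩
      have h1 : u (c (r, θ)) = 0 := hu0 _ (by rw [hcnorm]; simpa [abs_of_pos hr1'] using hrρ)
      have h2 : fderiv ℝ u (c (r, θ)) = 0 :=
        hdu0 _ (by rw [hcnorm]; simpa [abs_of_pos hr1'] using hrρ)
      simp [hG_def, hF_def, hFd_def, hD_def, h1, h2]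
    rw [setIntegral_eq_of_subset_of_forall_diff_eq_zero measurableSet_Ioi
        Set.Ioo_subset_Ioi_self hF0,
      setIntegral_eq_of_subset_of_forall_diff_eq_zero measurableSet_Ioi
        Set.Ioo_subset_Ioi_self hG0,
      ← integral_Ioc_eq_integral_Ioo, ← integral_Ioc_eq_integral_Ioo,
      ← intervalIntegral.integral_of_le hρ0.le, ← intervalIntegral.integral_of_le hρ0.le]
    have hg : ∀ r, HasDerivAt g (g' r) r := by
      intro r
      have h1 : HasDerivAt (fun r : ℝ => c (r, θ)) (dir (r, θ)) r := by
        simp only [hc_def]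
        have := (Complex.ofRealCLM.hasDerivAt (x := r)).mul_const (dir (r, θ))
        simpa using this
      have h2 := (hudiff (c (r, θ))).hasFDerivAt.comp_hasDerivAt r h1
      exact h2
    have hg'c : Continuous g' := by
      rw [hg'_def]
      exact hDcont.comp (continuous_id.prodMk continuous_const)
    have hgρ : g ρ = 0 := by
      rw [hg_def]
      exact hu0 _ (by rw [hcnorm]; simp [abs_of_pos hρ0])
    have key := hardy_1d ρ hρ0 hρ1 g g' hg hg'c hgρ
    have eF : ∀ r : ℝ, F (r, θ) = r * g r ^ 2 / (1 - r) ^ 2 := fun r => rfl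
    have eG : ∀ r : ℝ, G (r, θ) = 1 / 2 * (r * g r ^ 2 / (1 - r) ^ 2) + 2 * (r * g' r ^ 2) :=
      fun r => rfl
    simp only [eF, eG]
    exact key
  -- integrate the inner inequality in θ
  have hθ1 : Integrable (fun θ => ∫ r in Set.Ioi (0:ℝ), F (r, θ))
      ((volume : Measure ℝ).restrict (Set.Ioo (-π) π)) := hFint'.integral_prod_right
  have hθ2 : Integrable (fun θ => ∫ r in Set.Ioi (0:ℝ), G (r, θ))
      ((volume : Measure ℝ).restrict (Set.Ioo (-π) π)) := hGint'.integral_prod_right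
  have hmono : ∫ p in S, F p ≤ ∫ p in S, G p := by
    rw [hswapF, hswapG]
    exact integral_mono hθ1 hθ2 fun θ => hinner θ
  have hGsplit : ∫ p in S, G p = 1 / 2 * (∫ p in S, F p) + 2 * (∫ p in S, Fd p) := by
    rw [hG_def]
    rw [integral_add (hFint.const_mul _) (hFdint.const_mul _), integral_const_mul,
      integral_const_mul]
  have hFdle : ∫ p in S, Fd p ≤ ∫ p in S, Fn p := by
    apply setIntegral_mono_on hFdint hFnint hSmeas
    intro p hp
    have hp1 : (0:ℝ) ≤ p.1 := le_of_lt hp.1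
    have hop := (fderiv ℝ u (c p)).le_opNorm (dir p)
    rw [hdirnorm p, mul_one] at hop
    have habs : |D p| ≤ ‖fderiv ℝ u (c p)‖ := by
      rw [hD_def]
      exact le_trans (le_of_eq (Real.norm_eq_abs _).symm) hop
    have hsq : D p ^ 2 ≤ ‖fderiv ℝ u (c p)‖ ^ 2 := by
      rw [← sq_abs]
      exact pow_le_pow_left₀ (abs_nonneg _) habs 2
    exact mul_le_mul_of_nonneg_left hsq hp1
  rw [hpolar1, hpolar2]
  linarith [hmono, hGsplit, hFdle]
end

section
/- Let u ∈ C_c^∞((-1,1) × ℝ) (smooth, compactly supported in the open strip). Then ∫_{-1}^{1} u(x₁,0)²/(1-x₁) dx₁ ≤ (π/2) ∫_{(-1,1)×(0,∞)} |∇u|² dx₁ dx₂. -/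
open MeasureTheory

lemma my_cs {a b : ℝ} (hab : a ≤ b) (f : ℝ → ℝ) (hf : Continuous f) :
    (∫ x in Set.Ioo a b, f x) ^ 2 ≤ (b - a) * ∫ x in Set.Ioo a b, (f x) ^ 2 := by
  set μ := volume.restrict (Set.Ioo a b) with hμ
  have : Fact (volume (Set.Ioo a b) < ⊤) := ⟨by simp [Real.volume_Ioo]⟩
  have hfin : IsFiniteMeasure μ := by
    exact inferInstance
  have hconj : Real.HolderConjugate 2 2 := Real.holderConjugate_iff.mpr ⟨one_lt_two, by norm_num⟩
  -- Memℒp of |f| for exponent 2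
  obtain ⟨C, hC0, hC⟩ : ∃ C, 0 ≤ C ∧ ∀ x ∈ Set.Ioo a b, |f x| ≤ C := by
    obtain ⟨C, hC⟩ := (isCompact_Icc (a := a) (b := b)).exists_bound_of_continuousOn hf.continuousOn
    exact ⟨max C 0, le_max_right _ _, fun x hx => le_trans (by
      simpa using hC x (Set.mem_Icc_of_Ioo hx)) (le_max_left _ _)⟩
  have hmem : MemLp (fun x => |f x|) (ENNReal.ofReal 2) μ := by
    refine MemLp.of_bound (hf.abs.aestronglyMeasurable) C ?_
    rw [hμ]
    filter_upwards [ae_restrict_mem measurableSet_Ioo] with x hx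
    simpa [abs_abs] using hC x hx
  have hmem1 : MemLp (fun _ : ℝ => (1:ℝ)) (ENNReal.ofReal 2) μ := memLp_const 1
  have h := integral_mul_le_Lp_mul_Lq_of_nonneg (μ := μ) hconj
      (ae_of_all _ fun x => abs_nonneg (f x)) (ae_of_all _ fun _ => zero_le_one) hmem hmem1
  simp only [mul_one, Real.one_rpow] at h
  have h1 : ∫ _x, (1:ℝ) ∂μ = b - a := by
    simp [hμ, Real.volume_Ioo, ENNReal.toReal_ofReal (sub_nonneg.2 hab), hab]
  rw [h1] at h
  have habs : |∫ x, f x ∂μ| ≤ ∫ x, |f x| ∂μ := by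
    simpa using norm_integral_le_integral_norm (μ := μ) f
  have hsq : (∫ x, f x ∂μ) ^ 2 ≤ (∫ x, |f x| ∂μ) ^ 2 := by
    rw [← sq_abs]
    exact pow_le_pow_left₀ (abs_nonneg _) habs 2
  have hI2 : ∫ x, |f x| ^ (2:ℝ) ∂μ = ∫ x, (f x) ^ 2 ∂μ := by
    apply integral_congr_ae; filter_upwards with x
    rw [show ((2:ℝ)) = ((2:ℕ):ℝ) by norm_num, Real.rpow_natCast]
    simp [sq_abs]
  rw [hI2] at h
  have hInt2 : 0 ≤ ∫ x, (f x) ^ 2 ∂μ := integral_nonneg fun x => sq_nonneg _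
  have hfin2 : (∫ x, |f x| ∂μ) ^ 2 ≤ ((∫ x, (f x)^2 ∂μ) ^ ((1:ℝ)/2) * (b - a) ^ ((1:ℝ)/2)) ^ 2 :=
    pow_le_pow_left₀ (integral_nonneg fun x => abs_nonneg _) h 2
  calc (∫ x, f x ∂μ) ^ 2 ≤ (∫ x, |f x| ∂μ) ^ 2 := hsq
    _ ≤ ((∫ x, (f x)^2 ∂μ) ^ ((1:ℝ)/2) * (b - a) ^ ((1:ℝ)/2)) ^ 2 := hfin2
    _ = (b - a) * ∫ x, (f x)^2 ∂μ := by
        rw [mul_pow, ← Real.rpow_natCast (_ ^ ((1:ℝ)/2)) 2, ← Real.rpow_natCast ((b-a) ^ ((1:ℝ)/2)) 2,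
          ← Real.rpow_mul hInt2, ← Real.rpow_mul (sub_nonneg.2 hab)]
        norm_num [mul_comm]

lemma lemA (u : ℝ × ℝ → ℝ) (hu : ContDiff ℝ (⊤ : ℕ∞) u)
    (hsub : tsupport u ⊆ Set.Ioo (-1 : ℝ) 1 ×ˢ Set.univ)
    (r : ℝ) :
    u (1 - r, 0) ^ 2 ≤ (Real.pi / 2) * ∫ θ in Set.Ioo 0 Real.pi,
      r ^ 2 * ((fderiv ℝ u (1 + r * Real.cos θ, r * Real.sin θ) (1, 0)) ^ 2
        + (fderiv ℝ u (1 + r * Real.cos θ, r * Real.sin θ) (0, 1)) ^ 2) := by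
  set c : ℝ → ℝ × ℝ := fun θ => (1 + r * Real.cos θ, r * Real.sin θ) with hc
  set D : ℝ → ℝ := fun θ => fderiv ℝ u (c θ) (-(r * Real.sin θ), r * Real.cos θ) with hD
  have hcder : ∀ θ : ℝ, HasDerivAt c (-(r * Real.sin θ), r * Real.cos θ) θ := by
    intro θ
    have h1 : HasDerivAt (fun θ : ℝ => 1 + r * Real.cos θ) (-(r * Real.sin θ)) θ := by
      simpa [mul_comm, mul_neg] using ((Real.hasDerivAt_cos θ).const_mul r).const_add 1
    have h2 : HasDerivAt (fun θ : ℝ => r * Real.sin θ) (r * Real.cos θ) θ :=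
      (Real.hasDerivAt_sin θ).const_mul r
    exact h1.prodMk h2
  have hDer : ∀ θ : ℝ, HasDerivAt (fun θ => u (c θ)) (D θ) θ := fun θ =>
    ((hu.differentiable (by simp) (c θ)).hasFDerivAt).comp_hasDerivAt θ (hcder θ)
  have hfderiv_cont : Continuous (fderiv ℝ u) := hu.continuous_fderiv (by simp)
  have hcc : Continuous c := by fun_prop
  have hDcont : Continuous D := by
    apply (hfderiv_cont.comp hcc).clm_apply
    fun_prop
  -- FTC
  have hval : u (1 - r, 0) = ∫ θ in (Real.pi/2)..Real.pi, D θ := by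
    have := intervalIntegral.integral_eq_sub_of_hasDerivAt
      (f := fun θ => u (c θ)) (f' := D) (a := Real.pi/2) (b := Real.pi)
      (fun θ _ => hDer θ) (hDcont.intervalIntegrable _ _)
    rw [this]
    have h1 : c Real.pi = (1 - r, 0) := by
      simp [hc, Real.cos_pi, Real.sin_pi]; ring
    have h2 : c (Real.pi/2) = (1, r) := by
      simp [hc, Real.cos_pi_div_two, Real.sin_pi_div_two]
    have h3 : u (1, r) = 0 := by
      apply image_eq_zero_of_notMem_tsupport
      intro hmem
      have := hsub hmem
      simp at this
    show u (1 - r, 0) = u (c Real.pi) - u (c (Real.pi/2))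
    rw [h1, h2, h3, sub_zero]
  -- convert to set integral over Ioo
  have hval' : u (1 - r, 0) = ∫ θ in Set.Ioo (Real.pi/2) Real.pi, D θ := by
    rw [hval, intervalIntegral.integral_of_le (by linarith [Real.pi_pos]),
      ← integral_Ioc_eq_integral_Ioo]
  have hCS : u (1 - r, 0) ^ 2 ≤ (Real.pi / 2) * ∫ θ in Set.Ioo (Real.pi/2) Real.pi, (D θ)^2 := by
    rw [hval']
    have := my_cs (a := Real.pi/2) (b := Real.pi) (by linarith [Real.pi_pos]) D hDcont
    calc (∫ θ in Set.Ioo (Real.pi/2) Real.pi, D θ) ^ 2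
        ≤ (Real.pi - Real.pi/2) * ∫ θ in Set.Ioo (Real.pi/2) Real.pi, (D θ)^2 := this
      _ = (Real.pi/2) * ∫ θ in Set.Ioo (Real.pi/2) Real.pi, (D θ)^2 := by ring_nf
  have hmono : ∫ θ in Set.Ioo (Real.pi/2) Real.pi, (D θ)^2 ≤ ∫ θ in Set.Ioo 0 Real.pi, (D θ)^2 := by
    apply setIntegral_mono_set
    · exact ((hDcont.pow 2).integrableOn_Icc (a := 0) (b := Real.pi)).mono_set Set.Ioo_subset_Icc_self
    · filter_upwards with θ using sq_nonneg _
    · filter_upwards with θ hθ using ⟨by linarith [Real.pi_pos, hθ.1], hθ.2⟩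
  have hpt : ∀ θ ∈ Set.Ioo (0:ℝ) Real.pi, (D θ)^2 ≤
      r ^ 2 * ((fderiv ℝ u (c θ) (1, 0)) ^ 2 + (fderiv ℝ u (c θ) (0, 1)) ^ 2) := by
    intro θ _
    have hvec : ((-(r * Real.sin θ), r * Real.cos θ) : ℝ × ℝ)
        = (-(r * Real.sin θ)) • ((1:ℝ), (0:ℝ)) + (r * Real.cos θ) • ((0:ℝ), (1:ℝ)) := by
      simp [Prod.ext_iff]
    have : D θ = (-(r * Real.sin θ)) * (fderiv ℝ u (c θ) (1, 0))
        + (r * Real.cos θ) * (fderiv ℝ u (c θ) (0, 1)) := by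
      rw [hD]; simp only []
      rw [hvec, map_add, (fderiv ℝ u (c θ)).map_smul, (fderiv ℝ u (c θ)).map_smul]
      simp [smul_eq_mul]
    rw [this]
    have hpyth := Real.sin_sq_add_cos_sq θ
    set A := fderiv ℝ u (c θ) (1, 0)
    set B := fderiv ℝ u (c θ) (0, 1)
    nlinarith [sq_nonneg (r * Real.sin θ * B + r * Real.cos θ * A), sq_nonneg (r * Real.sin θ * A - r * Real.cos θ * B)]
  have hmono2 : ∫ θ in Set.Ioo 0 Real.pi, (D θ)^2 ≤ ∫ θ in Set.Ioo 0 Real.pi,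
      r ^ 2 * ((fderiv ℝ u (c θ) (1, 0)) ^ 2 + (fderiv ℝ u (c θ) (0, 1)) ^ 2) := by
    apply setIntegral_mono_on
    · exact ((hDcont.pow 2).integrableOn_Icc (a := 0) (b := Real.pi)).mono_set Set.Ioo_subset_Icc_self
    · have hcont2 : Continuous fun θ => r ^ 2 * ((fderiv ℝ u (c θ) (1, 0)) ^ 2 + (fderiv ℝ u (c θ) (0, 1)) ^ 2) := by
        have hA : Continuous fun θ => fderiv ℝ u (c θ) (1, 0) := (hfderiv_cont.comp hcc).clm_apply continuous_const
        have hB : Continuous fun θ => fderiv ℝ u (c θ) (0, 1) := (hfderiv_cont.comp hcc).clm_apply continuous_const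
        fun_prop
      exact (hcont2.integrableOn_Icc (a := 0) (b := Real.pi)).mono_set Set.Ioo_subset_Icc_self
    · exact measurableSet_Ioo
    · exact hpt
  calc u (1 - r, 0) ^ 2 ≤ (Real.pi / 2) * ∫ θ in Set.Ioo (Real.pi/2) Real.pi, (D θ)^2 := hCS
    _ ≤ (Real.pi / 2) * ∫ θ in Set.Ioo 0 Real.pi,
        r ^ 2 * ((fderiv ℝ u (c θ) (1, 0)) ^ 2 + (fderiv ℝ u (c θ) (0, 1)) ^ 2) := by
        apply mul_le_mul_of_nonneg_left (le_trans hmono hmono2) (by positivity)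

/-- Trace Hardy inequality with one-sided weight `1/(1-x₁)` on the half-strip:
for `u` smooth and compactly supported in the open strip `(-1,1) × ℝ`,
`∫_{-1}^{1} u(x₁,0)²/(1-x₁) dx₁ ≤ (π/2) ∫_{(-1,1)×(0,∞)} |∇u|²`. -/
theorem stmt_1 (u : ℝ × ℝ → ℝ) (hu : ContDiff ℝ (⊤ : ℕ∞) u) (hsupp : HasCompactSupport u)
    (hsub : tsupport u ⊆ Set.Ioo (-1 : ℝ) 1 ×ˢ Set.univ) :
    ∫ x₁ in Set.Ioo (-1 : ℝ) 1, (u (x₁, 0)) ^ 2 / (1 - x₁) ≤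
      (Real.pi / 2) * ∫ p in Set.Ioo (-1 : ℝ) 1 ×ˢ Set.Ioi (0 : ℝ),
        ((fderiv ℝ u p (1, 0)) ^ 2 + (fderiv ℝ u p (0, 1)) ^ 2) := by
  have hπ := Real.pi_pos
  set g : ℝ × ℝ → ℝ := fun p => (fderiv ℝ u p (1, 0)) ^ 2 + (fderiv ℝ u p (0, 1)) ^ 2 with hgdef
  have hfc : Continuous (fderiv ℝ u) := hu.continuous_fderiv (by simp)
  have hgc : Continuous g := by
    apply Continuous.add
    · exact (hfc.clm_apply continuous_const).pow 2
    · exact (hfc.clm_apply continuous_const).pow 2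
  have hgnn : ∀ p, 0 ≤ g p := fun p => by positivity
  have hgsupp : ∀ p : ℝ × ℝ, p ∉ tsupport u → g p = 0 := by
    intro p hp
    have : fderiv ℝ u p = 0 := by
      by_contra h
      exact hp (support_fderiv_subset ℝ h)
    simp [hgdef, this]
  have hg0 : ∀ p : ℝ × ℝ, p ∉ Set.Ioo (-1 : ℝ) 1 ×ˢ (Set.univ : Set ℝ) → g p = 0 :=
    fun p hp => hgsupp p (fun h => hp (hsub h))
  -- bound C for g
  obtain ⟨C₀, hC₀⟩ := (HasCompactSupport.intro hsupp (fun p hp => hgsupp p hp)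
    : HasCompactSupport g).exists_bound_of_continuous hgc
  set C : ℝ := max C₀ 0 with hCdef
  have hC : ∀ p, |g p| ≤ C := fun p => le_trans (by simpa using hC₀ p) (le_max_left _ _)
  have hCnn : 0 ≤ C := le_max_right _ _
  -- radius R
  obtain ⟨R₀, hR₀⟩ := hsupp.isBounded.subset_closedBall 0
  set R : ℝ := max R₀ 0 with hRdef
  have hR : tsupport u ⊆ Metric.closedBall 0 R :=
    hR₀.trans (Metric.closedBall_subset_closedBall (le_max_left _ _))
  have hRnn : 0 ≤ R := le_max_right _ _
  set M : ℝ := 2 * (R + 1) with hMdef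
  have hMpos : 0 < M := by positivity
  -- the function G and T
  set S : Set (ℝ × ℝ) := Set.univ ×ˢ Set.Ioi (0 : ℝ) with hSdef
  have hSmeas : MeasurableSet S := MeasurableSet.univ.prod measurableSet_Ioi
  set G : ℝ × ℝ → ℝ := fun q => Set.indicator S g (q + (1, 0)) with hGdef
  set T : ℝ × ℝ → ℝ := fun p => p.1 * G (p.1 * Real.cos p.2, p.1 * Real.sin p.2) with hTdef
  have hGmeas : Measurable G :=
    ((hgc.measurable).indicator hSmeas).comp (measurable_id.add_const ((1:ℝ), (0:ℝ)))
  have hGbd : ∀ q, |G q| ≤ C := by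
    intro q
    show |S.indicator g (q + (1, 0))| ≤ C
    by_cases h : (q + ((1:ℝ), (0:ℝ))) ∈ S
    · rw [Set.indicator_of_mem h]; exact hC _
    · rw [Set.indicator_of_notMem h]; simpa using hCnn
  have hGnn : ∀ q, 0 ≤ G q := fun q => Set.indicator_nonneg (fun p _ => hgnn p) _
  have hGsupp : ∀ q : ℝ × ℝ, G q ≠ 0 → ‖q‖ ≤ R + 1 := by
    intro q hq
    have h1 : g (q + (1, 0)) ≠ 0 := by
      intro h
      apply hq
      show S.indicator g (q + (1, 0)) = 0
      by_cases h2 : (q + ((1:ℝ), (0:ℝ))) ∈ S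
      · rw [Set.indicator_of_mem h2]; exact h
      · rw [Set.indicator_of_notMem h2]
    have h2 : q + (1, 0) ∈ tsupport u := by
      by_contra h
      exact h1 (hgsupp _ h)
    have h3 : ‖q + ((1:ℝ), (0:ℝ))‖ ≤ R := by
      have := hR h2
      simpa [Metric.mem_closedBall, dist_zero_right] using this
    calc ‖q‖ = ‖q + ((1:ℝ),(0:ℝ)) - ((1:ℝ),(0:ℝ))‖ := by rw [add_sub_cancel_right]
      _ ≤ ‖q + ((1:ℝ),(0:ℝ))‖ + ‖((1:ℝ),(0:ℝ))‖ := norm_sub_le _ _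
      _ ≤ R + 1 := by
          have : ‖((1:ℝ),(0:ℝ))‖ = 1 := by simp [Prod.norm_def]
          rw [this]; linarith
  -- Integrability of T on the polar target
  have hTmeas : Measurable T := by
    apply Measurable.mul measurable_fst
    exact hGmeas.comp (by fun_prop)
  have hTr : ∀ p : ℝ × ℝ, T p ≠ 0 → |p.1| ≤ M := by
    intro p hp
    have hG : G (p.1 * Real.cos p.2, p.1 * Real.sin p.2) ≠ 0 := by
      intro h; apply hp; rw [hTdef]; simp [h]
    have h1 := hGsupp _ hG
    rw [Prod.norm_def] at h1
    have h2 : |p.1 * Real.cos p.2| ≤ R + 1 := le_trans (le_max_left _ _) h1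
    have h3 : |p.1 * Real.sin p.2| ≤ R + 1 := le_trans (le_max_right _ _) h1
    have h4 : (p.1 * Real.cos p.2) ^ 2 ≤ (R + 1) ^ 2 := by
      rw [← sq_abs]; exact pow_le_pow_left₀ (abs_nonneg _) h2 2
    have h5 : (p.1 * Real.sin p.2) ^ 2 ≤ (R + 1) ^ 2 := by
      rw [← sq_abs]; exact pow_le_pow_left₀ (abs_nonneg _) h3 2
    have hpyth := Real.sin_sq_add_cos_sq p.2
    rw [hMdef]
    nlinarith [sq_nonneg (|p.1| - 2 * (R + 1)), abs_nonneg p.1, sq_abs p.1]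
  have hTint : IntegrableOn T (Set.Ioi (0:ℝ) ×ˢ Set.Ioo (-Real.pi) Real.pi) := by
    have hΦ : Integrable ((Set.Ioc (0:ℝ) M ×ˢ Set.Ioo (-Real.pi) Real.pi).indicator
        (fun _ => M * C)) (volume : Measure (ℝ × ℝ)) := by
      apply IntegrableOn.integrable_indicator _ (measurableSet_Ioc.prod measurableSet_Ioo)
      refine integrableOn_const ?_
      rw [Measure.volume_eq_prod, Measure.prod_prod, Real.volume_Ioc, Real.volume_Ioo]
      exact (ENNReal.mul_lt_top ENNReal.ofReal_lt_top ENNReal.ofReal_lt_top).ne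
    apply Integrable.mono' (hΦ.restrict) (hTmeas.aestronglyMeasurable.restrict)
    rw [ae_restrict_iff' (measurableSet_Ioi.prod measurableSet_Ioo)]
    filter_upwards with p hp
    by_cases hz : T p = 0
    · rw [hz]
      simpa using Set.indicator_nonneg (fun _ _ => by positivity) p
    · have h1 : p ∈ Set.Ioc (0:ℝ) M ×ˢ Set.Ioo (-Real.pi) Real.pi := by
        refine ⟨⟨hp.1, ?_⟩, hp.2⟩
        have := hTr p hz
        rwa [abs_of_pos hp.1] at this
      rw [Set.indicator_of_mem h1]
      calc ‖T p‖ = |p.1| * |G (p.1 * Real.cos p.2, p.1 * Real.sin p.2)| := by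
            rw [hTdef]; simp [abs_mul]
        _ ≤ M * C := by
            apply mul_le_mul (by rw [abs_of_pos hp.1]; exact (by have := hTr p hz; rwa [abs_of_pos hp.1] at this))
              (hGbd _) (abs_nonneg _) (le_of_lt hMpos)
  -- Fubini setup
  have hprodrestrict : (volume : Measure (ℝ × ℝ)).restrict (Set.Ioi (0:ℝ) ×ˢ Set.Ioo (-Real.pi) Real.pi)
      = (volume.restrict (Set.Ioi (0:ℝ))).prod (volume.restrict (Set.Ioo (-Real.pi) Real.pi)) := by
    rw [Measure.volume_eq_prod, Measure.prod_restrict]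
  set X : ℝ → ℝ := fun r => ∫ θ in Set.Ioo (-Real.pi) Real.pi, T (r, θ) with hXdef
  have hXint : IntegrableOn X (Set.Ioi (0:ℝ)) := by
    have h := hTint
    unfold IntegrableOn at h ⊢
    rw [hprodrestrict] at h
    exact h.integral_prod_left
  have hFub : ∫ p in Set.Ioi (0:ℝ) ×ˢ Set.Ioo (-Real.pi) Real.pi, T p
      = ∫ r in Set.Ioi (0:ℝ), X r := by
    have h := hTint
    rw [Measure.volume_eq_prod] at h ⊢
    exact setIntegral_prod T h
  have hXval : ∀ r : ℝ, 0 < r →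
      X r = ∫ θ in Set.Ioo 0 Real.pi, r * g (1 + r * Real.cos θ, r * Real.sin θ) := by
    intro r hr
    show (∫ θ in Set.Ioo (-Real.pi) Real.pi, T (r, θ)) = _
    have h1 : ∀ θ ∈ Set.Ioo (-Real.pi) Real.pi, T (r, θ)
        = Set.indicator (Set.Ioo 0 Real.pi) (fun θ => T (r, θ)) θ := by
      intro θ hθ
      by_cases h : θ ∈ Set.Ioo 0 Real.pi
      · rw [Set.indicator_of_mem h]
      · rw [Set.indicator_of_notMem h]
        have hθ0 : θ ≤ 0 := by
          rcases le_or_gt θ 0 with h' | h'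
          · exact h'
          · exact absurd ⟨h', hθ.2⟩ h
        have hsin : Real.sin θ ≤ 0 := Real.sin_nonpos_of_nonpos_of_neg_pi_le hθ0 (le_of_lt hθ.1)
        show r * G (r * Real.cos θ, r * Real.sin θ) = 0
        have hz : G (r * Real.cos θ, r * Real.sin θ) = 0 := by
          show S.indicator g _ = 0
          apply Set.indicator_of_notMem
          intro hmem
          have h2 := hmem.2
          simp only [Set.mem_Ioi] at h2
          have : r * Real.sin θ + 0 ≤ 0 := by
            rw [add_zero]
            exact mul_nonpos_iff.2 (Or.inl ⟨le_of_lt hr, hsin⟩)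
          exact absurd h2 (not_lt.2 this)
        rw [hz, mul_zero]
    rw [setIntegral_congr_fun measurableSet_Ioo h1, setIntegral_indicator measurableSet_Ioo,
      Set.inter_eq_self_of_subset_right (Set.Ioo_subset_Ioo (by linarith) le_rfl)]
    apply setIntegral_congr_fun measurableSet_Ioo
    intro θ hθ
    show r * G (r * Real.cos θ, r * Real.sin θ) = r * g (1 + r * Real.cos θ, r * Real.sin θ)
    have hsin : 0 < Real.sin θ := Real.sin_pos_of_pos_of_lt_pi hθ.1 hθ.2
    have hmem : ((r * Real.cos θ, r * Real.sin θ) + ((1:ℝ), (0:ℝ))) ∈ S := by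
      refine ⟨Set.mem_univ _, ?_⟩
      show (0:ℝ) < r * Real.sin θ + 0
      rw [add_zero]
      exact mul_pos hr hsin
    show r * S.indicator g _ = _
    rw [Set.indicator_of_mem hmem]
    norm_num [add_comm]
  have hXnn : ∀ r ∈ Set.Ioi (0:ℝ), 0 ≤ X r := by
    intro r hr
    apply setIntegral_nonneg measurableSet_Ioo
    intro θ _
    exact mul_nonneg (le_of_lt hr) (hGnn _)
  have hpolar : ∫ p in Set.Ioi (0:ℝ) ×ˢ Set.Ioo (-Real.pi) Real.pi, T p
      = ∫ p in Set.Ioo (-1:ℝ) 1 ×ˢ Set.Ioi (0:ℝ), g p := by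
    have hTeq : T = fun p : ℝ × ℝ => p.1 • G (polarCoord.symm p) := rfl
    rw [hTeq]
    rw [show Set.Ioi (0:ℝ) ×ˢ Set.Ioo (-Real.pi) Real.pi = polarCoord.target from rfl]
    rw [integral_comp_polarCoord_symm G]
    have h0 : ∫ q, G q = ∫ q, Set.indicator S g q :=
      integral_add_right_eq_self (Set.indicator S g) ((1:ℝ), (0:ℝ))
    rw [h0, integral_indicator hSmeas]
    have h2 : ∀ q ∈ S, g q = Set.indicator (Set.Ioo (-1:ℝ) 1 ×ˢ (Set.univ : Set ℝ)) g q := by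
      intro q _
      by_cases h : q ∈ Set.Ioo (-1:ℝ) 1 ×ˢ (Set.univ : Set ℝ)
      · rw [Set.indicator_of_mem h]
      · rw [Set.indicator_of_notMem h]; exact hg0 q h
    rw [setIntegral_congr_fun hSmeas h2,
      setIntegral_indicator (measurableSet_Ioo.prod MeasurableSet.univ)]
    congr 1
    rw [hSdef, Set.prod_inter_prod]
    simp
  -- the function near the boundary
  obtain ⟨δ, hδpos, hδ⟩ := IsCompact.exists_thickening_subset_open hsupp
    (isOpen_Ioo.prod isOpen_univ) hsub
  have hu_near : ∀ x : ℝ × ℝ, 1 - δ / 2 < x.1 → u x = 0 := by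
    intro x hx
    by_contra h
    have hx1 : x ∈ tsupport u := subset_tsupport u h
    have hmem : (x.1 + δ / 2, x.2) ∈ Metric.thickening δ (tsupport u) := by
      rw [Metric.mem_thickening_iff]
      refine ⟨x, hx1, ?_⟩
      have : dist ((x.1 + δ / 2, x.2) : ℝ × ℝ) x
          = max (dist (x.1 + δ / 2) x.1) (dist x.2 x.2) := Prod.dist_eq
      rw [this]
      have e1 : dist (x.1 + δ / 2) x.1 = δ / 2 := by
        rw [Real.dist_eq, add_sub_cancel_left]
        exact abs_of_pos (half_pos hδpos)
      rw [e1, dist_self]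
      rw [max_eq_left (by linarith)]
      linarith
    have h2 := (hδ hmem).1
    simp only [Set.mem_Ioo] at h2
    linarith [h2.2]
  set φ : ℝ → ℝ := fun x => u (x, 0) ^ 2 / (1 - x) with hφdef
  have hφc : Continuous φ := by
    rw [continuous_iff_continuousAt]
    intro x
    by_cases hx : x = 1
    · subst hx
      have hev : φ =ᶠ[nhds 1] (fun _ => (0:ℝ)) := by
        filter_upwards [Metric.ball_mem_nhds 1 (half_pos hδpos)] with y hy
        have h1 : u (y, 0) = 0 := by
          apply hu_near (y, 0)
          show 1 - δ / 2 < y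
          rw [Metric.mem_ball, Real.dist_eq, abs_lt] at hy
          linarith [hy.1]
        show u (y, 0) ^ 2 / (1 - y) = 0
        rw [h1]
        simp
      exact continuousAt_const.congr hev.symm
    · apply ContinuousAt.div
      · exact ((hu.continuous.comp (continuous_id.prodMk continuous_const)).pow 2).continuousAt
      · exact (continuous_const.sub continuous_id).continuousAt
      · exact sub_ne_zero.2 (Ne.symm hx)
  have hφsupp : HasCompactSupport φ := by
    apply HasCompactSupport.intro (isCompact_Icc (a := (-1:ℝ)) (b := 1))
    intro x hx
    have h1 : u (x, 0) = 0 := by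
      apply image_eq_zero_of_notMem_tsupport
      intro hmem
      have := hsub hmem
      simp only [Set.mem_prod, Set.mem_Ioo, Set.mem_univ, and_true] at this
      exact hx ⟨le_of_lt this.1, le_of_lt this.2⟩
    show u (x, 0) ^ 2 / (1 - x) = 0
    rw [h1]
    simp
  have hφint : Integrable φ := hφc.integrable_of_hasCompactSupport hφsupp
  have hstep1 : ∫ x in Set.Ioo (-1:ℝ) 1, φ x = ∫ r in Set.Ioo (0:ℝ) 2, φ (1 - r) := by
    rw [← integral_Ioc_eq_integral_Ioo, ← integral_Ioc_eq_integral_Ioo,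
      ← intervalIntegral.integral_of_le (by norm_num : (-1:ℝ) ≤ 1),
      ← intervalIntegral.integral_of_le (by norm_num : (0:ℝ) ≤ 2),
      intervalIntegral.integral_comp_sub_left (a := (0:ℝ)) (b := 2) (fun x => φ x) 1]
    norm_num
  have hstep2 : ∀ r ∈ Set.Ioo (0:ℝ) 2, φ (1 - r) ≤ (Real.pi / 2) * X r := by
    intro r hr
    have hr0 : 0 < r := hr.1
    have hφr : φ (1 - r) = u (1 - r, 0) ^ 2 / r := by
      show u (1 - r, 0) ^ 2 / (1 - (1 - r)) = _
      congr 1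
      ring
    rw [hφr, hXval r hr0, div_le_iff₀ hr0]
    have hA : u (1 - r, 0) ^ 2 ≤ (Real.pi / 2) * ∫ θ in Set.Ioo 0 Real.pi,
        r ^ 2 * g (1 + r * Real.cos θ, r * Real.sin θ) := lemA u hu hsub r
    have hB : (∫ θ in Set.Ioo 0 Real.pi, r ^ 2 * g (1 + r * Real.cos θ, r * Real.sin θ))
        = r * ∫ θ in Set.Ioo 0 Real.pi, r * g (1 + r * Real.cos θ, r * Real.sin θ) := by
      rw [← integral_const_mul]
      apply setIntegral_congr_fun measurableSet_Ioo
      intro θ _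
      ring
    rw [hB] at hA
    calc u (1 - r, 0) ^ 2
        ≤ Real.pi / 2 * (r * ∫ θ in Set.Ioo 0 Real.pi,
            r * g (1 + r * Real.cos θ, r * Real.sin θ)) := hA
      _ = Real.pi / 2 * (∫ θ in Set.Ioo 0 Real.pi,
            r * g (1 + r * Real.cos θ, r * Real.sin θ)) * r := by ring
  have hchain : ∫ r in Set.Ioo (0:ℝ) 2, φ (1 - r) ≤ (Real.pi / 2) * ∫ r in Set.Ioi (0:ℝ), X r := by
    have h1 : IntegrableOn (fun r => (Real.pi / 2) * X r) (Set.Ioo (0:ℝ) 2) :=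
      (hXint.mono_set (fun r hr => hr.1)).const_mul _
    have h2 : IntegrableOn (fun r => φ (1 - r)) (Set.Ioo (0:ℝ) 2) :=
      ((hφc.comp (continuous_const.sub continuous_id)).integrable_of_hasCompactSupport
        (hφsupp.comp_homeomorph (Homeomorph.subLeft (1:ℝ)))).integrableOn
    calc ∫ r in Set.Ioo (0:ℝ) 2, φ (1 - r)
        ≤ ∫ r in Set.Ioo (0:ℝ) 2, (Real.pi / 2) * X r :=
          setIntegral_mono_on h2 h1 measurableSet_Ioo hstep2
      _ ≤ ∫ r in Set.Ioi (0:ℝ), (Real.pi / 2) * X r := by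
          apply setIntegral_mono_set (hXint.const_mul _)
          · refine (ae_restrict_iff' measurableSet_Ioi).mpr (ae_of_all _ fun r hr => ?_)
            exact mul_nonneg (by positivity) (hXnn r hr)
          · exact HasSubset.Subset.eventuallyLE (fun r hr => hr.1)
      _ = (Real.pi / 2) * ∫ r in Set.Ioi (0:ℝ), X r := integral_const_mul _ _
  calc ∫ x₁ in Set.Ioo (-1:ℝ) 1, u (x₁, 0) ^ 2 / (1 - x₁)
      = ∫ r in Set.Ioo (0:ℝ) 2, φ (1 - r) := hstep1
    _ ≤ (Real.pi / 2) * ∫ r in Set.Ioi (0:ℝ), X r := hchain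
    _ = (Real.pi / 2) * ∫ p in Set.Ioi (0:ℝ) ×ˢ Set.Ioo (-Real.pi) Real.pi, T p := by rw [hFub]
    _ = (Real.pi / 2) * ∫ p in Set.Ioo (-1:ℝ) 1 ×ˢ Set.Ioi (0:ℝ), g p := by rw [hpolar]
end

section
/- Every smooth harmonic function v : ℝ² \ {0} → ℝ satisfying |∇v(x)| ≤ C/|x| for all x ≠ 0 is of the form v(x) = a·log|x| + b for constants a, b ∈ ℝ, up to addition of a bounded harmonic function; in particular, if moreover ∇v ∈ L²(ℝ² \ {0}), then v is constant. -/
open MeasureTheory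
open scoped ENNReal NNReal
-- constancy on compl of singleton
lemma aux_const_on {g : ℂ → ℝ}
    (hd : ∀ z : ℂ, z ≠ 0 → HasFDerivAt g (0 : ℂ →L[ℝ] ℝ) z) :
    ∀ z w : ℂ, z ≠ 0 → w ≠ 0 → g z = g w := by
  intro z w hz hw
  have hconn : IsPreconnected ({(0:ℂ)}ᶜ) :=
    (isConnected_compl_singleton_of_one_lt_rank
      (by rw [Complex.rank_real_complex]; norm_num) 0).isPreconnected
  haveI : PreconnectedSpace ({(0:ℂ)}ᶜ : Set ℂ) :=
    Subtype.preconnectedSpace hconn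
  have hloc : IsLocallyConstant (fun x : ({(0:ℂ)}ᶜ : Set ℂ) => g x.1) := by
    rw [IsLocallyConstant.iff_exists_open]
    intro x
    obtain ⟨ε, hε, hball⟩ := Metric.isOpen_iff.1 (isOpen_compl_singleton (x := (0:ℂ))) x.1 x.2
    refine ⟨Subtype.val ⁻¹' Metric.ball x.1 ε, (Metric.isOpen_ball).preimage continuous_subtype_val,
      by simpa using hε, fun y hy => ?_⟩
    have hconst : ∀ p ∈ Metric.ball x.1 ε, ∀ q ∈ Metric.ball x.1 ε, g p = g q := by
      intro p hp q hq
      have := (convex_ball x.1 ε).norm_image_sub_le_of_norm_hasFDerivWithin_le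
        (f := g) (f' := fun _ => (0 : ℂ →L[ℝ] ℝ)) (C := 0)
        (fun y hy => (hd y (hball hy)).hasFDerivWithinAt)
        (fun y _ => by simp) hq hp
      simpa using by
        have : |g p - g q| ≤ 0 := by simpa using this
        linarith [abs_nonneg (g p - g q), this, abs_le.1 this]
    exact hconst y.1 hy x.1 (Metric.mem_ball_self hε)
  exact hloc.apply_eq_of_preconnectedSpace ⟨z, hz⟩ ⟨w, hw⟩
noncomputable def logD (z : ℂ) : ℂ →L[ℝ] ℝ :=
  (Complex.normSq z)⁻¹ • (z.re • Complex.reCLM + z.im • Complex.imCLM)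

lemma logD_apply (z u : ℂ) :
    logD z u = (z.re * u.re + z.im * u.im) / Complex.normSq z := by
  simp [logD, div_eq_inv_mul, mul_add]

lemma hasFDerivAt_log_norm {z : ℂ} (hz : z ≠ 0) :
    HasFDerivAt (fun w : ℂ => Real.log ‖w‖) (logD z) z := by
  have hns : HasFDerivAt Complex.normSq
      ((z.re • Complex.reCLM + z.re • Complex.reCLM)
        + (z.im • Complex.imCLM + z.im • Complex.imCLM)) z := by
    have h1 : HasFDerivAt (fun w : ℂ => w.re * w.re + w.im * w.im)
        ((z.re • Complex.reCLM + z.re • Complex.reCLM)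
          + (z.im • Complex.imCLM + z.im • Complex.imCLM)) z :=
      ((Complex.reCLM.hasFDerivAt.mul Complex.reCLM.hasFDerivAt).add
        (Complex.imCLM.hasFDerivAt.mul Complex.imCLM.hasFDerivAt))
    exact h1.congr_of_eventuallyEq (by filter_upwards with w; simp [Complex.normSq_apply])
  have hpos : 0 < Complex.normSq z := Complex.normSq_pos.2 hz
  have hlog : HasDerivAt Real.log (Complex.normSq z)⁻¹ (Complex.normSq z) :=
    Real.hasDerivAt_log hpos.ne'
  have hcomp := hlog.comp_hasFDerivAt z hns
  have hmul := (hcomp.const_mul (1/2 : ℝ)).congr_of_eventuallyEq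
    (f₁ := fun w : ℂ => Real.log ‖w‖) (by
      filter_upwards with w
      show Real.log ‖w‖ = 1/2 * Real.log (Complex.normSq w)
      rw [show Complex.normSq w = ‖w‖^2 by
        rw [Complex.normSq_eq_norm_sq], Real.log_pow]
      push_cast; ring)
  refine hmul.congr_fderiv ?_
  ext u
  simp [logD, Complex.normSq_apply]
  ring

noncomputable def Fm (v : ℂ → ℝ) : ℂ → ℂ :=
  fun z => (fderiv ℝ v z 1 : ℂ) - (fderiv ℝ v z Complex.I : ℂ) * Complex.I

noncomputable def phiC : (ℂ →L[ℝ] ℝ) →L[ℝ] ℂ :=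
  Complex.ofRealCLM.comp (ContinuousLinearMap.apply ℝ ℝ (1 : ℂ))
    - (ContinuousLinearMap.apply ℝ ℝ (Complex.I)).smulRight Complex.I

lemma phiC_apply (L : ℂ →L[ℝ] ℝ) :
    phiC L = (L 1 : ℂ) - (L Complex.I : ℂ) * Complex.I := by
  simp [phiC, Complex.real_smul]

lemma aux_holo {v : ℂ → ℝ}
    (hv1 : ∀ z : ℂ, z ≠ 0 → HasFDerivAt v (fderiv ℝ v z) z)
    (hv2 : ∀ z : ℂ, z ≠ 0 → HasFDerivAt (fderiv ℝ v) (fderiv ℝ (fderiv ℝ v) z) z)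
    (hharm : ∀ z : ℂ, z ≠ 0 →
      fderiv ℝ (fun w => fderiv ℝ v w 1) z 1
        + fderiv ℝ (fun w => fderiv ℝ v w Complex.I) z Complex.I = 0)
    {z : ℂ} (hz : z ≠ 0) : DifferentiableAt ℂ (Fm v) z := by
  set A := fderiv ℝ (fderiv ℝ v) z with hA
  -- fderiv of evaluated second derivative
  have heval : ∀ u : ℂ, fderiv ℝ (fun w => fderiv ℝ v w u) z
      = (ContinuousLinearMap.apply ℝ ℝ u).comp A := by
    intro u
    exact (((ContinuousLinearMap.apply ℝ ℝ u).hasFDerivAt).comp z (hv2 z hz)).fderiv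
  -- harmonicity in terms of A
  have hharm' : A 1 1 + A Complex.I Complex.I = 0 := by
    have := hharm z hz
    rw [heval 1, heval Complex.I] at this
    simpa using this
  -- symmetry of second derivative
  have hsymm : A Complex.I 1 = A 1 Complex.I := by
    have hev : ∀ᶠ y in nhds z, HasFDerivAt v (fderiv ℝ v y) y := by
      filter_upwards [IsOpen.mem_nhds isOpen_compl_singleton hz] with y hy
      exact hv1 y hy
    exact second_derivative_symmetric_of_eventually_of_real hev (hv2 z hz)
      Complex.I 1
  -- real derivative of Fm v
  have hF : HasFDerivAt (Fm v) (phiC.comp A) z := by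
    have := (phiC.hasFDerivAt.comp z (hv2 z hz))
    exact this.congr_of_eventuallyEq (by
      filter_upwards with w
      show Fm v w = phiC (fderiv ℝ v w)
      rw [phiC_apply]; rfl)
  set c : ℂ := (A 1 1 : ℂ) - (A 1 Complex.I : ℂ) * Complex.I with hc
  have hrs : ((ContinuousLinearMap.id ℂ ℂ).smulRight c).restrictScalars ℝ = phiC.comp A := by
    ext u
    have hu : u = u.re • (1:ℂ) + u.im • Complex.I := by
      simp [Complex.real_smul, Complex.re_add_im]
    simp only [ContinuousLinearMap.coe_restrictScalars', ContinuousLinearMap.smulRight_apply,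
      ContinuousLinearMap.id_apply, ContinuousLinearMap.coe_comp', Function.comp_apply,
      smul_eq_mul]
    conv_rhs => rw [hu]
    rw [map_add, A.map_smul, A.map_smul, map_add, phiC.map_smul, phiC.map_smul, phiC_apply, phiC_apply]
    have h1 : A Complex.I 1 = A 1 Complex.I := hsymm
    have h2 : (A Complex.I Complex.I : ℝ) = - A 1 1 := by linarith [hharm']
    rw [h1, h2]
    conv_lhs => rw [hu]
    simp only [hc, Complex.real_smul]
    push_cast
    linear_combination (-((((A 1) Complex.I : ℝ)):ℂ) * (u.im:ℂ)) * Complex.I_sq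
  exact (hasFDerivAt_of_restrictScalars (𝕜 := ℝ) hF hrs).differentiableAt

lemma Fm_mul_re (v : ℂ → ℝ) (z u : ℂ) : (Fm v z * u).re = fderiv ℝ v z u := by
  conv_rhs => rw [show u = u.re • (1:ℂ) + u.im • Complex.I by
    simp [Complex.real_smul, Complex.re_add_im]]
  rw [map_add, _root_.map_smul, _root_.map_smul]
  simp [Fm, Complex.mul_re]
  ring

lemma aux_liouville {F : ℂ → ℂ} {M : ℝ}
    (hd : ∀ z : ℂ, z ≠ 0 → DifferentiableAt ℂ F z)
    (hb : ∀ z : ℂ, z ≠ 0 → ‖F z‖ ≤ M / ‖z‖) :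
    ∀ z : ℂ, z ≠ 0 → F z = F 1 * z⁻¹ := by
  set G : ℂ → ℂ := fun z => z * F z with hG
  have hGb : ∀ z : ℂ, z ≠ 0 → ‖G z‖ ≤ M := by
    intro z hz
    have h0 : (0:ℝ) < ‖z‖ := by simpa [norm_pos_iff] using hz
    calc ‖G z‖ = ‖z‖ * ‖F z‖ := norm_mul _ _
    _ ≤ ‖z‖ * (M / ‖z‖) := by
        exact mul_le_mul_of_nonneg_left (hb z hz) h0.le
    _ = M := by rw [mul_comm, div_mul_cancel₀ _ h0.ne']
  have hGd : DifferentiableOn ℂ G (Set.univ \ {0}) := by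
    intro z hz
    exact ((differentiableAt_id.mul (hd z hz.2)).differentiableWithinAt)
  have hBdd : BddAbove (norm ∘ G '' (Set.univ \ {0})) := by
    refine ⟨M, fun x hx => ?_⟩
    obtain ⟨z, hz, rfl⟩ := hx
    exact hGb z hz.2
  have hE := Complex.differentiableOn_update_limUnder_of_bddAbove
    (Filter.univ_mem) hGd hBdd
  set E : ℂ → ℂ := Function.update G 0 (Filter.limUnder (nhdsWithin 0 {(0:ℂ)}ᶜ) G) with hEdef
  have hEd : Differentiable ℂ E := by
    intro z
    exact (hE z trivial).differentiableAt (Filter.univ_mem)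
  have hEG : ∀ z : ℂ, z ≠ 0 → E z = G z := fun z hz => Function.update_of_ne hz _ _
  have hEb : ∀ z : ℂ, ‖E z‖ ≤ M := by
    intro z
    rcases eq_or_ne z 0 with rfl | hz
    · have ht : Filter.Tendsto (fun w => ‖E w‖) (nhdsWithin 0 {(0:ℂ)}ᶜ) (nhds ‖E 0‖) :=
        ((hEd 0).continuousAt.norm.tendsto).mono_left nhdsWithin_le_nhds
      refine le_of_tendsto ht ?_
      filter_upwards [self_mem_nhdsWithin] with w hw
      rw [hEG w hw]
      exact hGb w hw
    · rw [hEG z hz]; exact hGb z hz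
  have hconst := hEd.apply_eq_apply_of_bounded
    (isBounded_iff_forall_norm_le.2 ⟨M, by rintro - ⟨z, rfl⟩; exact hEb z⟩)
  intro z hz
  have h1 : z * F z = 1 * F 1 := by
    have := hconst z 1
    rwa [hEG z hz, hEG 1 one_ne_zero] at this
  field_simp at h1 ⊢
  linear_combination h1

lemma aux_im_zero {v : ℂ → ℝ} {aC : ℂ}
    (hv1 : ∀ z : ℂ, z ≠ 0 → HasFDerivAt v (fderiv ℝ v z) z)
    (hFa : ∀ z : ℂ, z ≠ 0 → Fm v z = aC * z⁻¹) : aC.im = 0 := by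
  set φ : ℝ → ℝ := fun t => v (circleMap 0 1 t) + aC.im * t with hφdef
  have hφ : ∀ t : ℝ, HasDerivAt φ 0 t := by
    intro t
    have hne : circleMap 0 1 t ≠ 0 := by
      simpa using circleMap_ne_center (one_ne_zero) (c := 0) (θ := t)
    have h1 := (hv1 _ hne).comp_hasDerivAt t (hasDerivAt_circleMap 0 1 t)
    have h2 : fderiv ℝ v (circleMap 0 1 t) (circleMap 0 1 t * Complex.I) = -aC.im := by
      rw [← Fm_mul_re, hFa _ hne]
      rw [show aC * (circleMap 0 1 t)⁻¹ * (circleMap 0 1 t * Complex.I) = aC * Complex.I by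
        field_simp]
      simp
    rw [h2] at h1
    have h3 := h1.add ((hasDerivAt_id t).const_mul aC.im)
    simpa [hφdef, Pi.add_def, Function.comp_def] using h3.congr_deriv (by ring : -aC.im + aC.im * 1 = 0)
  have hconst : φ 0 = φ (2 * Real.pi) := by
    have hdiff : Differentiable ℝ φ := fun t => (hφ t).differentiableAt
    have hderiv : ∀ t, deriv φ t = 0 := fun t => (hφ t).deriv
    exact (is_const_of_deriv_eq_zero hdiff hderiv 0 (2 * Real.pi))
  have hper : circleMap 0 1 (2 * Real.pi) = circleMap 0 1 0 := by
    simpa using (periodic_circleMap 0 1 0)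
  rw [hφdef] at hconst
  simp only [hper] at hconst
  have hπ : (0:ℝ) < Real.pi := Real.pi_pos
  nlinarith [hconst]

lemma aux_not_integrable {c : ℝ} (hc : 0 < c) :
    ¬ IntegrableOn (fun z : ℂ => c / ‖z‖ ^ 2) {(0:ℂ)}ᶜ := by
  intro h
  set A : ℕ → Set ℂ := fun n => Metric.ball 0 ((2:ℝ)^(n+1)) \ Metric.ball 0 ((2:ℝ)^n) with hA
  have h24 : ∀ k : ℕ, ((2:ℝ)^k)^2 = (4:ℝ)^k := by
    intro k
    rw [← pow_mul, mul_comm, pow_mul]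
    norm_num
  have hAmeas : ∀ n, MeasurableSet (A n) :=
    fun n => measurableSet_ball.diff measurableSet_ball
  have hAmem : ∀ n, ∀ z ∈ A n, (2:ℝ)^n ≤ ‖z‖ ∧ ‖z‖ < (2:ℝ)^(n+1) := by
    intro n z hz
    obtain ⟨h1, h2⟩ := hz
    simp only [Metric.mem_ball, Complex.dist_eq, sub_zero] at h1 h2
    constructor
    · simpa using not_lt.1 h2
    · simpa using h1
  have hAsub : ∀ n, A n ⊆ {(0:ℂ)}ᶜ := by
    intro n z hz
    have := (hAmem n z hz).1
    have hzpos : (0:ℝ) < ‖z‖ := lt_of_lt_of_le (by positivity) this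
    simpa [norm_pos_iff] using hzpos
  have hdisj : Pairwise (Function.onFun Disjoint A) := by
    intro m n hmn
    wlog hlt : m < n generalizing m n
    · exact (this hmn.symm (by omega)).symm
    rw [Function.onFun, Set.disjoint_left]
    intro z hzm hzn
    have h1 := (hAmem m z hzm).2
    have h2 := (hAmem n z hzn).1
    have : (2:ℝ)^(m+1) ≤ (2:ℝ)^n := by
      apply pow_le_pow_right₀ one_le_two
      omega
    linarith
  -- lower bound on each annulus
  have hvol : ∀ n, volume (A n) = ENNReal.ofReal (3 * ((4:ℝ))^n) * NNReal.pi := by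
    intro n
    rw [hA]
    rw [measure_diff (Metric.ball_subset_ball (by
        apply pow_le_pow_right₀ one_le_two; omega))
      measurableSet_ball.nullMeasurableSet (by
        rw [Complex.volume_ball]; exact ENNReal.mul_ne_top
          (ENNReal.pow_ne_top ENNReal.ofReal_ne_top) ENNReal.coe_ne_top)]
    rw [Complex.volume_ball, Complex.volume_ball]
    rw [← ENNReal.sub_mul (by intro _ _; exact ENNReal.coe_ne_top)]
    congr 1
    rw [← ENNReal.ofReal_pow (by positivity), ← ENNReal.ofReal_pow (by positivity),
      ← ENNReal.ofReal_sub _ (by positivity)]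
    congr 1
    rw [h24, h24, pow_succ]
    ring
  have hlow : ∀ n, ENNReal.ofReal (3 * Real.pi * c / 4) ≤
      ∫⁻ z in A n, ENNReal.ofReal (c / ‖z‖^2) := by
    intro n
    have hstep : ∀ z ∈ A n, ENNReal.ofReal (c / (4:ℝ)^(n+1)) ≤ ENNReal.ofReal (c / ‖z‖^2) := by
      intro z hz
      apply ENNReal.ofReal_le_ofReal
      have hz1 := (hAmem n z hz).1
      have hz0 : (0:ℝ) < ‖z‖ := lt_of_lt_of_le (by positivity) hz1
      apply div_le_div_of_nonneg_left hc.le (pow_pos hz0 2)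
      have h2 := (hAmem n z hz).2
      calc ‖z‖^2 ≤ ((2:ℝ)^(n+1))^2 := by
            apply pow_le_pow_left₀ (norm_nonneg _) h2.le
      _ = 4^(n+1) := h24 (n+1)
    calc ENNReal.ofReal (3 * Real.pi * c / 4)
        = ENNReal.ofReal (c / (4:ℝ)^(n+1)) * volume (A n) := by
          rw [hvol]
          rw [← ENNReal.ofReal_coe_nnreal, ← ENNReal.ofReal_mul (by positivity),
            ← ENNReal.ofReal_mul (by positivity)]
          congr 1
          have h4 : ((4:ℝ))^(n+1) = 4 * 4^n := by ring
          rw [h4]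
          have : (NNReal.pi : ℝ) = Real.pi := rfl
          rw [this]
          field_simp
      _ ≤ ∫⁻ z in A n, ENNReal.ofReal (c / ‖z‖^2) := by
          rw [← setLIntegral_const]
          apply setLIntegral_mono (by
            apply ENNReal.measurable_ofReal.comp
            exact (measurable_const.div ((measurable_norm).pow_const 2))) hstep
  -- total integral is finite
  have hfin : (∫⁻ z in {(0:ℂ)}ᶜ, ENNReal.ofReal (c / ‖z‖^2)) < ⊤ := by
    have := h.2
    rw [hasFiniteIntegral_iff_ofReal (by
      filter_upwards with z
      positivity)] at this
    exact this
  have hsum : (∫⁻ z in ⋃ n, A n, ENNReal.ofReal (c / ‖z‖^2))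
      = ∑' n, ∫⁻ z in A n, ENNReal.ofReal (c / ‖z‖^2) :=
    lintegral_iUnion hAmeas hdisj _
  have hsub2 : (⋃ n, A n) ⊆ {(0:ℂ)}ᶜ := Set.iUnion_subset hAsub
  have htop : (⊤:ℝ≥0∞) ≤ ∫⁻ z in {(0:ℂ)}ᶜ, ENNReal.ofReal (c / ‖z‖^2) := by
    calc (⊤:ℝ≥0∞) = ∑' (_ : ℕ), ENNReal.ofReal (3 * Real.pi * c / 4) := by
          rw [ENNReal.tsum_const_eq_top_of_ne_zero]
          · positivity
      _ ≤ ∑' n, ∫⁻ z in A n, ENNReal.ofReal (c / ‖z‖^2) := ENNReal.tsum_le_tsum hlow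
      _ = ∫⁻ z in ⋃ n, A n, ENNReal.ofReal (c / ‖z‖^2) := hsum.symm
      _ ≤ _ := lintegral_mono_set hsub2
  exact absurd (lt_of_le_of_lt htop hfin) (lt_irrefl _)
/-- Bôcher-type theorem: a smooth harmonic function `v` on `ℝ² \ {0}` with `|∇v(x)| ≤ C/|x|`
is of the form `v(x) = a log|x| + h(x)` with `h` a bounded harmonic function; in particular,
if moreover `∇v ∈ L²(ℝ² \ {0})`, then `v` is constant. -/
theorem stmt_10 (v : ℂ → ℝ) (C : ℝ)
    (hv : ContDiffOn ℝ (⊤ : ℕ∞) v {(0 : ℂ)}ᶜ)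
    (hharm : ∀ z : ℂ, z ≠ 0 →
      fderiv ℝ (fun w => fderiv ℝ v w 1) z 1
        + fderiv ℝ (fun w => fderiv ℝ v w Complex.I) z Complex.I = 0)
    (hgrad : ∀ z : ℂ, z ≠ 0 → ‖fderiv ℝ v z‖ ≤ C / ‖z‖) :
    (∃ a : ℝ, ∃ h : ℂ → ℝ,
      (∀ z : ℂ, z ≠ 0 →
        fderiv ℝ (fun w => fderiv ℝ h w 1) z 1
          + fderiv ℝ (fun w => fderiv ℝ h w Complex.I) z Complex.I = 0)
      ∧ (∃ B : ℝ, ∀ z : ℂ, z ≠ 0 → |h z| ≤ B)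
      ∧ (∀ z : ℂ, z ≠ 0 → v z = a * Real.log ‖z‖ + h z))
    ∧ (IntegrableOn (fun z => ‖fderiv ℝ v z‖ ^ 2) {(0 : ℂ)}ᶜ →
        ∀ z w : ℂ, z ≠ 0 → w ≠ 0 → v z = v w) := by
  have hv1 : ∀ z : ℂ, z ≠ 0 → HasFDerivAt v (fderiv ℝ v z) z := by
    intro z hz
    exact ((hv.contDiffAt (isOpen_compl_singleton.mem_nhds hz)).differentiableAt
      (by simp)).hasFDerivAt
  have hv2 : ∀ z : ℂ, z ≠ 0 → HasFDerivAt (fderiv ℝ v) (fderiv ℝ (fderiv ℝ v) z) z := by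
    intro z hz
    have hcd : ContDiffOn ℝ (⊤ : ℕ∞) (fderiv ℝ v) {(0:ℂ)}ᶜ :=
      hv.fderiv_of_isOpen isOpen_compl_singleton (by simp)
    exact ((hcd.contDiffAt (isOpen_compl_singleton.mem_nhds hz)).differentiableAt
      (by simp)).hasFDerivAt
  have hd : ∀ z : ℂ, z ≠ 0 → DifferentiableAt ℂ (Fm v) z :=
    fun z hz => aux_holo hv1 hv2 hharm hz
  have hFb : ∀ z : ℂ, z ≠ 0 → ‖Fm v z‖ ≤ (2 * C) / ‖z‖ := by
    intro z hz
    have h1 : ‖Fm v z‖ ≤ ‖((fderiv ℝ v z 1 : ℝ) : ℂ)‖ + ‖((fderiv ℝ v z Complex.I : ℝ) : ℂ) * Complex.I‖ :=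
      norm_sub_le _ _
    have h2 : ‖((fderiv ℝ v z 1 : ℝ) : ℂ)‖ ≤ ‖fderiv ℝ v z‖ := by
      rw [Complex.norm_real]
      have := (fderiv ℝ v z).le_opNorm 1
      simpa using this
    have h3 : ‖((fderiv ℝ v z Complex.I : ℝ) : ℂ) * Complex.I‖ ≤ ‖fderiv ℝ v z‖ := by
      rw [norm_mul, Complex.norm_I, mul_one, Complex.norm_real]
      have := (fderiv ℝ v z).le_opNorm Complex.I
      simpa using this
    have h4 := hgrad z hz
    calc ‖Fm v z‖ ≤ ‖fderiv ℝ v z‖ + ‖fderiv ℝ v z‖ := le_trans h1 (add_le_add h2 h3)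
      _ ≤ C / ‖z‖ + C / ‖z‖ := add_le_add h4 h4
      _ = 2 * C / ‖z‖ := by ring
  have hFa : ∀ z : ℂ, z ≠ 0 → Fm v z = Fm v 1 * z⁻¹ := aux_liouville hd hFb
  set a : ℝ := (Fm v 1).re with ha
  have haC : Fm v 1 = (a : ℂ) := by
    have him : (Fm v 1).im = 0 := aux_im_zero hv1 hFa
    exact Complex.ext (by simp [ha]) (by simp [him])
  have hrep : ∀ z : ℂ, z ≠ 0 → ∀ u : ℂ, fderiv ℝ v z u = (((a:ℂ) * z⁻¹) * u).re := by
    intro z hz u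
    rw [← Fm_mul_re, hFa z hz, haC]
  have hzero : ∀ z : ℂ, z ≠ 0 →
      HasFDerivAt (fun w => v w - a * Real.log ‖w‖) (0 : ℂ →L[ℝ] ℝ) z := by
    intro z hz
    have hD := (hv1 z hz).sub ((hasFDerivAt_log_norm hz).const_mul a)
    have heq : fderiv ℝ v z - a • logD z = 0 := by
      ext u
      have hns : Complex.normSq z ≠ 0 := (Complex.normSq_pos.2 hz).ne'
      simp only [ContinuousLinearMap.coe_sub', Pi.sub_apply, ContinuousLinearMap.coe_smul',
        Pi.smul_apply, ContinuousLinearMap.zero_apply, smul_eq_mul]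
      rw [hrep z hz u, logD_apply]
      simp only [Complex.mul_re, Complex.ofReal_re, Complex.ofReal_im, Complex.inv_re,
        Complex.inv_im, Complex.mul_im]
      field_simp
      ring
    rwa [heq] at hD
  have hgz : ∀ z : ℂ, z ≠ 0 → v z = a * Real.log ‖z‖ + v 1 := by
    intro z hz
    have := aux_const_on hzero z 1 hz one_ne_zero
    have h1 : ‖(1:ℂ)‖ = 1 := by simp
    rw [h1, Real.log_one] at this
    linarith
  constructor
  · refine ⟨a, fun _ => v 1, ?_, ⟨|v 1|, fun z _ => le_refl _⟩, fun z hz => hgz z hz⟩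
    intro z hz
    have hc : ∀ u : ℂ, (fun w : ℂ => fderiv ℝ (fun _ : ℂ => v 1) w u) = fun _ => (0:ℝ) := by
      intro u; funext w; simp
    rw [hc 1, hc Complex.I]
    simp
  · intro hint z w hz hw
    have hA0 : a = 0 := by
      by_contra hane
      -- lower bound on the gradient norm
      have hlb : ∀ ζ : ℂ, ζ ≠ 0 → a^2 / ‖ζ‖^2 ≤ ‖fderiv ℝ v ζ‖^2 := by
        intro ζ hζ
        have hζ0 : (0:ℝ) < ‖ζ‖ := by simpa [norm_pos_iff] using hζ
        have hval : fderiv ℝ v ζ ((‖ζ‖⁻¹ : ℝ) • ζ) = a / ‖ζ‖ := by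
          rw [hrep ζ hζ]
          rw [show ((‖ζ‖⁻¹ : ℝ) • ζ : ℂ) = ((‖ζ‖⁻¹ : ℝ) : ℂ) * ζ by rw [Complex.real_smul]]
          rw [show (a:ℂ) * ζ⁻¹ * (((‖ζ‖⁻¹:ℝ):ℂ) * ζ) = (a:ℂ) * ((‖ζ‖⁻¹:ℝ):ℂ) * (ζ⁻¹ * ζ) by ring]
          rw [inv_mul_cancel₀ hζ]
          rw [mul_one, ← Complex.ofReal_mul]
          rw [Complex.ofReal_re]
          rw [div_eq_mul_inv]
        have hnorm1 : ‖(‖ζ‖⁻¹ : ℝ) • ζ‖ = 1 := by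
          rw [norm_smul]
          rw [Real.norm_eq_abs, abs_of_pos (inv_pos.2 hζ0)]
          exact inv_mul_cancel₀ hζ0.ne'
        have hle : |a| / ‖ζ‖ ≤ ‖fderiv ℝ v ζ‖ := by
          have := (fderiv ℝ v ζ).le_opNorm ((‖ζ‖⁻¹ : ℝ) • ζ)
          rw [hval, hnorm1, mul_one] at this
          calc |a| / ‖ζ‖ = |a / ‖ζ‖| := by rw [abs_div, abs_of_pos hζ0]
            _ = ‖(a / ‖ζ‖ : ℝ)‖ := (Real.norm_eq_abs _).symm
            _ ≤ ‖fderiv ℝ v ζ‖ := this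
        have hsq := pow_le_pow_left₀ (by positivity) hle 2
        rw [div_pow, sq_abs] at hsq
        exact hsq
      have hpos : (0:ℝ) < a^2 := by positivity
      apply aux_not_integrable hpos
      refine Integrable.mono hint ?_ ?_
      · exact (measurable_const.div ((measurable_norm).pow_const 2)).aestronglyMeasurable
      · rw [ae_restrict_iff' (isOpen_compl_singleton.measurableSet)]
        refine Filter.Eventually.of_forall fun ζ hζ => ?_
        have hζne : ζ ≠ 0 := hζ
        have h1 := hlb ζ hζne
        have h2 : (0:ℝ) ≤ a^2 / ‖ζ‖^2 := by positivity
        rw [Real.norm_eq_abs, Real.norm_eq_abs, abs_of_nonneg h2,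
          abs_of_nonneg (by positivity : (0:ℝ) ≤ ‖fderiv ℝ v ζ‖^2)]
        exact h1
    rw [hgz z hz, hgz w hw, hA0]
    simp
end
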